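/- arXiv:1212.0895 — 2 statements merged into one kernel-verified Lean document; each statement's English description precedes it below -/
import Mathlib

section
/- Under the hypotheses that all entries of the n×n matrix U and the vector v are either strictly positive or equal to ε, and that the graph associated with U is acyclic, the solution of x = U ⊗ x ⊕ v with entries in R̲ bounded above (i.e., each coordinate finite or ε) is unique, and equals (E ⊕ U)^p ⊗ v where p is the longest path length in the graph of U. -/
noncomputable section

/-- The max-plus carrier: ℝ ∪ {ε} with ε = -∞. ⊕ is `max`, ⊗ is `+`
(with ⊥ absorbing for `+` in `WithBot ℝ`). -/
abbrev MP : Type := WithBot ℝ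

/-- Entrywise max-plus matrix addition (⊕). -/
def mpAdd {n : ℕ} (X Y : Matrix (Fin n) (Fin n) MP) : Matrix (Fin n) (Fin n) MP :=
  fun i j => max (X i j) (Y i j)

/-- Max-plus matrix multiplication (⊗): (X ⊗ Y)_ij = max_k (x_ik + y_kj). -/
def mpMul {n : ℕ} (X Y : Matrix (Fin n) (Fin n) MP) : Matrix (Fin n) (Fin n) MP :=
  fun i j => Finset.univ.sup fun k => X i k + Y k j

/-- The max-plus identity matrix E: 0 on the diagonal, ε off it. -/
def mpId (n : ℕ) : Matrix (Fin n) (Fin n) MP :=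
  fun i j => if i = j then 0 else ⊥

/-- Max-plus matrix powers, X⁰ = E, X^{q+1} = X ⊗ X^q. -/
def mpPow {n : ℕ} (X : Matrix (Fin n) (Fin n) MP) : ℕ → Matrix (Fin n) (Fin n) MP
  | 0 => mpId n
  | q + 1 => mpMul X (mpPow X q)

/-- Max-plus matrix-vector product: (A ⊗ x)_i = max_j (a_ij + x_j). -/
def mpMulVec {n : ℕ} (A : Matrix (Fin n) (Fin n) MP) (x : Fin n → MP) : Fin n → MP :=
  fun i => Finset.univ.sup fun j => A i j + x j

/-- A directed path of length `q` from `i` to `j` in the graph associated with `X`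
(arc (a,b) exists iff X a b ≠ ε). -/
def IsPath {n : ℕ} (X : Matrix (Fin n) (Fin n) MP) (q : ℕ) (i j : Fin n) : Prop :=
  ∃ f : Fin (q + 1) → Fin n, f 0 = i ∧ f (Fin.last q) = j ∧
    ∀ t : Fin q, X (f t.castSucc) (f t.succ) ≠ ⊥

/-- The graph associated with `X` is acyclic. -/
def Acyclic {n : ℕ} (X : Matrix (Fin n) (Fin n) MP) : Prop :=
  ∀ q : ℕ, 1 ≤ q → ∀ i : Fin n, ¬ IsPath X q i i

-- distribution of + over Finset.sup
lemma MP.add_finsup {ι : Type} (a : MP) (s : Finset ι) (f : ι → MP) :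
    a + s.sup f = s.sup fun b => a + f b := by
  induction s using Finset.cons_induction with
  | empty => simp
  | cons b s hb ih =>
      rw [Finset.sup_cons, Finset.sup_cons,
        ← max_add_add_left, ih]

lemma MP.finsup_add {ι : Type} (a : MP) (s : Finset ι) (f : ι → MP) :
    s.sup f + a = s.sup fun b => f b + a := by
  induction s using Finset.cons_induction with
  | empty => simp
  | cons b s hb ih =>
      rw [Finset.sup_cons, Finset.sup_cons,
        ← max_add_add_right, ih]

lemma mpMulVec_mpMul {n : ℕ} (A B : Matrix (Fin n) (Fin n) MP) (x : Fin n → MP) :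
    mpMulVec (mpMul A B) x = mpMulVec A (mpMulVec B x) := by
  funext i
  simp only [mpMulVec, mpMul, MP.add_finsup, MP.finsup_add]
  rw [Finset.sup_comm]
  simp [add_assoc]

lemma mpMulVec_max {n : ℕ} (A : Matrix (Fin n) (Fin n) MP) (y z : Fin n → MP) :
    mpMulVec A (fun j => max (y j) (z j)) = fun i => max (mpMulVec A y i) (mpMulVec A z i) := by
  funext i
  simp only [mpMulVec]
  rw [← Finset.sup_sup]
  congr 1
  funext j
  simp [(max_add_add_left (A i j) (y j) (z j)).symm]

lemma mpMulVec_id {n : ℕ} (x : Fin n → MP) : mpMulVec (mpId n) x = x := by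
  funext i
  apply le_antisymm
  · apply Finset.sup_le
    intro j _
    by_cases h : i = j
    · subst h; simp [mpId]
    · simp [mpId, h]
  · have := Finset.le_sup (f := fun j => mpId n i j + x j) (Finset.mem_univ i)
    simpa [mpId, mpMulVec] using this

lemma mpMulVec_mpAdd {n : ℕ} (A B : Matrix (Fin n) (Fin n) MP) (x : Fin n → MP) :
    mpMulVec (mpAdd A B) x = fun i => max (mpMulVec A x i) (mpMulVec B x i) := by
  funext i
  simp only [mpMulVec, mpAdd]
  rw [← Finset.sup_sup]
  congr 1
  funext j
  simp [(max_add_add_right (A i j) (B i j) (x j)).symm]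

lemma mpMulVec_mono {n : ℕ} (A : Matrix (Fin n) (Fin n) MP) {y z : Fin n → MP}
    (h : ∀ j, y j ≤ z j) (i : Fin n) : mpMulVec A y i ≤ mpMulVec A z i := by
  simp only [mpMulVec]
  apply Finset.sup_le
  intro j _
  exact le_trans (add_le_add_right (h j) _)
    (Finset.le_sup (f := fun j => A i j + z j) (Finset.mem_univ j))

-- powers and paths
lemma mpPow_ne_bot_isPath {n : ℕ} (U : Matrix (Fin n) (Fin n) MP) :
    ∀ q i j, mpPow U q i j ≠ ⊥ → IsPath U q i j := by
  intro q
  induction q with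
  | zero =>
      intro i j h
      simp only [mpPow, mpId] at h
      have hij : i = j := by by_contra hc; simp [hc] at h
      subst hij
      exact ⟨fun _ => i, rfl, rfl, fun t => t.elim0⟩
  | succ q ih =>
      intro i j h
      simp only [mpPow, mpMul] at h
      have : ∃ k : Fin n, U i k + mpPow U q k j ≠ ⊥ := by
        by_contra hc
        push_neg at hc
        exact h (le_bot_iff.mp (Finset.sup_le fun k _ => le_of_eq (hc k)))
      obtain ⟨k, hk⟩ := this
      have h1 : U i k ≠ ⊥ := fun hb => hk (by simp [hb])
      have h2 : mpPow U q k j ≠ ⊥ := fun hb => hk (by simp [hb])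
      obtain ⟨f, hf0, hfl, hfa⟩ := ih k j h2
      refine ⟨Fin.cases i f, by simp, ?_, ?_⟩
      · show Fin.cases i f (Fin.last (q+1)) = j
        rw [← Fin.succ_last, Fin.cases_succ, hfl]
      · intro t
        induction t using Fin.cases with
        | zero =>
            show U (Fin.cases i f ((0 : Fin (q+1)).castSucc)) (Fin.cases i f (Fin.succ (0 : Fin (q+1)))) ≠ ⊥
            rw [Fin.cases_succ, Fin.castSucc_zero, Fin.cases_zero, hf0]
            exact h1
        | succ s =>
            show U (Fin.cases i f ((Fin.succ s).castSucc)) (Fin.cases i f (Fin.succ (Fin.succ s))) ≠ ⊥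
            rw [← Fin.succ_castSucc, Fin.cases_succ, Fin.cases_succ]
            exact hfa s

-- iterated partial sums: mpIter U v q = (E ⊕ U ⊕ ... ⊕ U^q) ⊗ v (Horner form)
def mpIter {n : ℕ} (U : Matrix (Fin n) (Fin n) MP) (v : Fin n → MP) : ℕ → (Fin n → MP)
  | 0 => v
  | q + 1 => fun i => max (v i) (mpMulVec U (mpIter U v q) i)

lemma le_mpIter {n : ℕ} (U : Matrix (Fin n) (Fin n) MP) (v : Fin n → MP) :
    ∀ q i, v i ≤ mpIter U v q i
  | 0, i => le_rfl
  | q + 1, i => le_max_left _ _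

lemma mpIter_mono {n : ℕ} (U : Matrix (Fin n) (Fin n) MP) (v : Fin n → MP) :
    ∀ q i, mpIter U v q i ≤ mpIter U v (q + 1) i
  | 0, i => le_max_left _ _
  | q + 1, i => max_le (le_max_left _ _)
      (le_trans (mpMulVec_mono U (mpIter_mono U v q) i) (le_max_right _ _))

lemma mpPowW_eq_mpIter {n : ℕ} (U : Matrix (Fin n) (Fin n) MP) (v : Fin n → MP) :
    ∀ q, mpMulVec (mpPow (mpAdd (mpId n) U) q) v = mpIter U v q := by
  intro q
  induction q with
  | zero => exact mpMulVec_id v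
  | succ q ih =>
      show mpMulVec (mpMul (mpAdd (mpId n) U) (mpPow (mpAdd (mpId n) U) q)) v = _
      rw [mpMulVec_mpMul, ih, mpMulVec_mpAdd, mpMulVec_id]
      funext i
      show max (mpIter U v q i) (mpMulVec U (mpIter U v q) i) = mpIter U v (q + 1) i
      apply le_antisymm
      · exact max_le (mpIter_mono U v q i) (le_max_right _ _)
      · exact max_le (le_trans (le_mpIter U v q i) (le_max_left _ _)) (le_max_right _ _)

/-- Uniqueness: under the hypotheses of Lemma 1, any solution (with entries in
R̲ = ℝ ∪ {ε}, hence bounded) of x = U ⊗ x ⊕ v equals (E ⊕ U)^p ⊗ v. -/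
theorem maxplus_implicit_unique (n p : ℕ)
    (U : Matrix (Fin n) (Fin n) MP) (v : Fin n → MP)
    (hU : ∀ i j, U i j = ⊥ ∨ 0 < U i j)
    (hv : ∀ i, v i = ⊥ ∨ 0 < v i)
    (hac : Acyclic U)
    (hpe : ∃ i j : Fin n, IsPath U p i j)
    (hp : ∀ q (i j : Fin n), IsPath U q i j → q ≤ p)
    (x : Fin n → MP)
    (hx : x = fun i => max (mpMulVec U x i) (v i)) :
    x = mpMulVec (mpPow (mpAdd (mpId n) U) p) v := by
  have key : ∀ q, x = fun i => max (mpIter U v q i) (mpMulVec (mpPow U (q + 1)) x i) := by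
    intro q
    induction q with
    | zero =>
        funext i
        show x i = max (mpIter U v 0 i) (mpMulVec (mpMul U (mpId n)) x i)
        rw [mpMulVec_mpMul, mpMulVec_id]
        conv_lhs => rw [hx]
        exact max_comm (mpMulVec U x i) (v i)
    | succ q ih =>
        funext i
        conv_lhs => rw [hx]
        have hUx : mpMulVec U x i
            = max (mpMulVec U (mpIter U v q) i) (mpMulVec (mpPow U (q + 2)) x i) := by
          conv_lhs => rw [ih]
          rw [mpMulVec_max]
          show _ = max _ (mpMulVec (mpMul U (mpPow U (q + 1))) x i)
          rw [mpMulVec_mpMul]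
        show max (mpMulVec U x i) (v i)
            = max (max (v i) (mpMulVec U (mpIter U v q) i)) (mpMulVec (mpPow U (q + 2)) x i)
        rw [hUx, max_comm (v i) (mpMulVec U (mpIter U v q) i),
          sup_right_comm]
  have hbot : ∀ i, mpMulVec (mpPow U (p + 1)) x i = ⊥ := by
    intro i
    have hM : ∀ j, mpPow U (p + 1) i j = ⊥ := by
      intro j
      by_contra h
      have := hp (p + 1) i j (mpPow_ne_bot_isPath U (p + 1) i j h)
      omega
    refine le_bot_iff.mp (Finset.sup_le fun j _ => ?_)
    simp [hM j]
  rw [mpPowW_eq_mpIter]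
  funext i
  rw [key p]
  simp [hbot i]
end
end

section
/- Fork-join network state equation: suppose departure vectors satisfy the implicit recursion d(k) = 𝒯_k ⊗ G₀ᵀ ⊗ d(k) ⊕ 𝒯_k ⊗ d(k−1) ⊕ 𝒯_k ⊗ ⊕_{m=1}^{M} G_mᵀ ⊗ d(k−m), where 𝒯_k is a diagonal max-plus matrix with strictly positive diagonal entries τ_{ik} and the graph associated with G₀ is acyclic with longest path length p. Then d(k) = ⊕_{m=1}^{M} T_m(k) ⊗ d(k−m), where T₁(k) = (E ⊕ 𝒯_k ⊗ G₀ᵀ)^p ⊗ 𝒯_k ⊗ (E ⊕ G₁ᵀ) and T_m(k) = (E ⊕ 𝒯_k ⊗ G₀ᵀ)^p ⊗ 𝒯_k ⊗ G_mᵀ for 2 ≤ m ≤ M. -/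
noncomputable section

open Matrix

section Aux

variable {n : ℕ}

lemma mp_add_max (a b c : MP) : a + max b c = max (a + b) (a + c) := by
  rcases le_total b c with h | h
  · rw [max_eq_right h, max_eq_right (add_le_add (le_refl a) h)]
  · rw [max_eq_left h, max_eq_left (add_le_add (le_refl a) h)]

lemma mp_max_add (a b c : MP) : max b c + a = max (b + a) (c + a) := by
  simp only [add_comm _ a, mp_add_max]

lemma mp_add_finsup {α : Type*} (s : Finset α) (a : MP) (f : α → MP) :
    a + s.sup f = s.sup fun x => a + f x := by
  induction s using Finset.cons_induction with
  | empty => simp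
  | cons x s hx ih => simp [Finset.sup_cons, mp_add_max, ih]

lemma mp_finsup_add {α : Type*} (s : Finset α) (a : MP) (f : α → MP) :
    s.sup f + a = s.sup fun x => f x + a := by
  simp only [add_comm _ a, mp_add_finsup]

lemma mp_sup_max {α : Type*} (s : Finset α) (f g : α → MP) :
    (s.sup fun x => max (f x) (g x)) = max (s.sup f) (s.sup g) := by
  induction s using Finset.cons_induction with
  | empty => simp
  | cons x s hx ih =>
    simp only [Finset.sup_cons, ih]
    exact max_max_max_comm _ _ _ _

lemma mulVec_add (A B : Matrix (Fin n) (Fin n) MP) (x : Fin n → MP) :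
    mpMulVec (mpAdd A B) x = fun i => max (mpMulVec A x i) (mpMulVec B x i) := by
  funext i
  simp only [mpMulVec, mpAdd, mp_max_add, mp_sup_max]

lemma mulVec_id (x : Fin n → MP) : mpMulVec (mpId n) x = x := by
  funext i
  simp only [mpMulVec]
  apply le_antisymm
  · apply Finset.sup_le; intro j _
    by_cases h : i = j
    · subst h; simp [mpId]
    · simp [mpId, h]
  · exact Finset.le_sup_of_le (Finset.mem_univ i) (by simp [mpId])

lemma mulVec_mul (A B : Matrix (Fin n) (Fin n) MP) (x : Fin n → MP) :
    mpMulVec (mpMul A B) x = mpMulVec A (mpMulVec B x) := by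
  funext i
  simp only [mpMulVec, mpMul]
  calc (Finset.univ.sup fun j => (Finset.univ.sup fun l => A i l + B l j) + x j)
      = Finset.univ.sup fun j => Finset.univ.sup fun l => (A i l + B l j) + x j := by
        refine Finset.sup_congr rfl fun j _ => ?_
        exact mp_finsup_add _ _ _
    _ = Finset.univ.sup fun l => Finset.univ.sup fun j => (A i l + B l j) + x j :=
        Finset.sup_comm _ _ _
    _ = Finset.univ.sup fun l => A i l + Finset.univ.sup fun j => B l j + x j := by
        refine Finset.sup_congr rfl fun l _ => ?_
        rw [mp_add_finsup]
        simp only [add_assoc]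

lemma mulVec_max (A : Matrix (Fin n) (Fin n) MP) (x y : Fin n → MP) :
    mpMulVec A (fun j => max (x j) (y j)) = fun i => max (mpMulVec A x i) (mpMulVec A y i) := by
  funext i
  simp only [mpMulVec, mp_add_max, mp_sup_max]

lemma mulVec_bot (A : Matrix (Fin n) (Fin n) MP) :
    mpMulVec A (fun _ => (⊥ : MP)) = fun _ => (⊥ : MP) := by
  funext i
  simp [mpMulVec]

lemma mulVec_finsup {α : Type*} (A : Matrix (Fin n) (Fin n) MP) (s : Finset α)
    (g : α → Fin n → MP) :
    mpMulVec A (fun j => s.sup fun m => g m j) = fun i => s.sup fun m => mpMulVec A (g m) i := by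
  induction s using Finset.cons_induction with
  | empty => simpa using mulVec_bot A
  | cons a s ha ih =>
    have h1 : (fun j => (Finset.cons a s ha).sup fun m => g m j)
        = fun j => max (g a j) (s.sup fun m => g m j) := by
      funext j; simp [Finset.sup_cons]
    rw [h1, mulVec_max, ih]
    funext i; simp [Finset.sup_cons]

lemma le_mulVec_star (U : Matrix (Fin n) (Fin n) MP) (x : Fin n → MP) :
    ∀ q i, x i ≤ mpMulVec (mpPow (mpAdd (mpId n) U) q) x i := by
  intro q
  induction q with
  | zero => intro i; simp [mpPow, mulVec_id]
  | succ q ih =>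
    intro i
    have h : mpMulVec (mpPow (mpAdd (mpId n) U) (q+1)) x
        = fun i => max (mpMulVec (mpPow (mpAdd (mpId n) U) q) x i)
            (mpMulVec U (mpMulVec (mpPow (mpAdd (mpId n) U) q) x) i) := by
      show mpMulVec (mpMul (mpAdd (mpId n) U) (mpPow (mpAdd (mpId n) U) q)) x = _
      rw [mulVec_mul, mulVec_add, mulVec_id]
    rw [h]
    exact le_trans (ih i) (le_max_left _ _)

end Aux
section Aux2
variable {n : ℕ}

lemma diag_mul_entry (tau : Fin n → ℝ) (T B : Matrix (Fin n) (Fin n) MP)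
    (hT : T = fun i j => if i = j then ((tau i : ℝ) : MP) else ⊥) (i k : Fin n) :
    mpMul T Bᵀ i k = ((tau i : ℝ) : MP) + B k i := by
  subst hT
  simp only [mpMul]
  apply le_antisymm
  · apply Finset.sup_le; intro l _
    by_cases h : i = l
    · subst h; simp [Matrix.transpose_apply]
    · simp [h]
  · exact Finset.le_sup_of_le (Finset.mem_univ i) (by simp [Matrix.transpose_apply])

lemma pow_ne_bot_isPath (U G0 : Matrix (Fin n) (Fin n) MP)
    (hUG : ∀ i k, U i k ≠ ⊥ → G0 k i ≠ ⊥) :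
    ∀ q (i j : Fin n), mpPow U q i j ≠ ⊥ → IsPath G0 q j i := by
  intro q
  induction q with
  | zero =>
    intro i j h
    have hij : i = j := by
      by_contra hij
      exact h (by simp [mpPow, mpId, hij])
    subst hij
    exact ⟨fun _ => i, rfl, rfl, fun t => t.elim0⟩
  | succ q ih =>
    intro i j h
    have hex : ∃ l, U i l + mpPow U q l j ≠ ⊥ := by
      by_contra hc
      push_neg at hc
      apply h
      show (Finset.univ.sup fun l => U i l + mpPow U q l j) = ⊥
      exact le_antisymm (Finset.sup_le fun l _ => le_of_eq (hc l)) bot_le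
    obtain ⟨l, hl⟩ := hex
    have hU : U i l ≠ ⊥ := fun hb => hl (by simp [hb])
    have hP : mpPow U q l j ≠ ⊥ := fun hb => hl (by simp [hb])
    obtain ⟨f, hf0, hfl, hfa⟩ := ih l j hP
    have harc : G0 l i ≠ ⊥ := hUG i l hU
    refine ⟨Fin.snoc f i, ?_, ?_, ?_⟩
    · rw [show (0 : Fin (q+2)) = Fin.castSucc 0 by simp, Fin.snoc_castSucc]
      exact hf0
    · simp [Fin.snoc_last]
    · intro t
      refine Fin.lastCases ?_ ?_ t
      · rw [Fin.succ_last, Fin.snoc_last, Fin.snoc_castSucc, hfl]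
        exact harc
      · intro s
        rw [Fin.succ_castSucc, Fin.snoc_castSucc, Fin.snoc_castSucc]
        exact hfa s

end Aux2
lemma mp_sup_split (M : ℕ) (hM : 1 ≤ M) (a : MP) (b f : ℕ → MP)
    (hf1 : f 1 = max a (b 1)) (hfm : ∀ m, m ≠ 1 → f m = b m) :
    max a ((Finset.Icc 1 M).sup b) = (Finset.Icc 1 M).sup f := by
  have h1M : (1:ℕ) ∈ Finset.Icc 1 M := Finset.mem_Icc.mpr ⟨le_rfl, hM⟩
  rw [← Finset.insert_erase h1M, Finset.sup_insert, Finset.sup_insert, hf1,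
    Finset.sup_congr rfl fun m hm => hfm m (Finset.ne_of_mem_erase hm),
    max_assoc]

/-- Fork-join network dynamic state equation (Theorem 2): if the departures
satisfy the implicit recursion and the graph of G₀ is acyclic with longest path
length p, then d(k) = ⊕_{m=1}^{M} T_m(k) ⊗ d(k-m) with the stated state
transition matrices. -/
theorem forkjoin_state_equation (n M p k : ℕ) (hM : 1 ≤ M) (hk : M ≤ k)
    (tau : Fin n → ℝ) (htau : ∀ i, 0 < tau i)
    (T : Matrix (Fin n) (Fin n) MP)
    (hT : T = fun i j => if i = j then ((tau i : ℝ) : MP) else ⊥)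
    (G : ℕ → Matrix (Fin n) (Fin n) MP)
    (hG : ∀ m (i j : Fin n), G m i j = 0 ∨ G m i j = ⊥)
    (hac : Acyclic (G 0))
    (hpe : ∃ i j : Fin n, IsPath (G 0) p i j)
    (hp : ∀ q (i j : Fin n), IsPath (G 0) q i j → q ≤ p)
    (d : ℕ → Fin n → MP)
    (hrec : d k = fun i =>
      max (mpMulVec (mpMul T (G 0)ᵀ) (d k) i)
        (max (mpMulVec T (d (k - 1)) i)
          ((Finset.Icc 1 M).sup fun m => mpMulVec (mpMul T (G m)ᵀ) (d (k - m)) i))) :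
    d k = fun i => (Finset.Icc 1 M).sup fun m =>
      mpMulVec
        (if m = 1 then
          mpMul (mpMul (mpPow (mpAdd (mpId n) (mpMul T (G 0)ᵀ)) p) T)
            (mpAdd (mpId n) (G 1)ᵀ)
        else
          mpMul (mpMul (mpPow (mpAdd (mpId n) (mpMul T (G 0)ᵀ)) p) T) (G m)ᵀ)
        (d (k - m)) i := by
  set U : Matrix (Fin n) (Fin n) MP := mpMul T (G 0)ᵀ with hUdef
  set Ap : Matrix (Fin n) (Fin n) MP := mpPow (mpAdd (mpId n) U) p with hApdef
  set v : Fin n → MP := fun i =>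
    max (mpMulVec T (d (k - 1)) i)
      ((Finset.Icc 1 M).sup fun m => mpMulVec (mpMul T (G m)ᵀ) (d (k - m)) i) with hvdef
  have hrec' : d k = fun i => max (mpMulVec U (d k) i) (v i) := hrec
  -- the graph of U is the reverse of that of G 0
  have hUentry : ∀ i l, U i l = ((tau i : ℝ) : MP) + G 0 l i := by
    intro i l
    rw [hUdef]
    exact diag_mul_entry tau T (G 0) hT i l
  have hUG : ∀ i l, U i l ≠ ⊥ → G 0 l i ≠ ⊥ := by
    intro i l h hb
    exact h (by rw [hUentry i l, hb, WithBot.add_bot])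
  have hUpow : ∀ i j, mpPow U (p+1) i j = (⊥ : MP) := by
    intro i j
    by_contra h
    have hpath := pow_ne_bot_isPath U (G 0) hUG (p+1) i j h
    have := hp (p+1) j i hpath
    omega
  have hUpowvec : ∀ i, mpMulVec (mpPow U (p+1)) (d k) i = (⊥ : MP) := by
    intro i
    refine le_antisymm ?_ bot_le
    show (Finset.univ.sup fun j => mpPow U (p+1) i j + d k j) ≤ ⊥
    refine Finset.sup_le fun j _ => ?_
    rw [hUpow i j]
    simp
  -- iterate the implicit recursion
  have key : ∀ q, d k = fun i =>
      max (mpMulVec (mpPow U (q+1)) (d k) i)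
        (mpMulVec (mpPow (mpAdd (mpId n) U) q) v i) := by
    intro q
    induction q with
    | zero =>
      have h0 : mpMulVec (mpPow U (0+1)) (d k) = mpMulVec U (d k) := by
        simp only [mpPow]
        rw [mulVec_mul, mulVec_id]
      have h1 : mpMulVec (mpPow (mpAdd (mpId n) U) 0) v = v := by
        simp only [mpPow]
        rw [mulVec_id]
      rw [h0, h1]
      exact hrec'
    | succ q ih =>
      set w := mpMulVec (mpPow (mpAdd (mpId n) U) q) v with hw
      have Apow : mpMulVec (mpPow (mpAdd (mpId n) U) (q+1)) v
          = fun i => max (w i) (mpMulVec U w i) := by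
        simp only [mpPow]
        rw [mulVec_mul, mulVec_add, mulVec_id]
      have hUp2 : mpMulVec (mpPow U (q+1+1)) (d k)
          = mpMulVec U (mpMulVec (mpPow U (q+1)) (d k)) := by
        simp only [mpPow]
        rw [mulVec_mul]
      funext i
      have hwx : w i ≤ d k i :=
        le_trans (le_max_right (mpMulVec (mpPow U (q+1)) (d k) i) (w i))
          (le_of_eq (congrFun ih i).symm)
      have hvw : v i ≤ w i := le_mulVec_star U v q i
      have hU1 : mpMulVec U (d k) i
          = max (mpMulVec U (mpMulVec (mpPow U (q+1)) (d k)) i) (mpMulVec U w i) := by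
        calc mpMulVec U (d k) i
            = mpMulVec U (fun j => max (mpMulVec (mpPow U (q+1)) (d k) j) (w j)) i := by
              conv_lhs => rw [ih]
          _ = max (mpMulVec U (mpMulVec (mpPow U (q+1)) (d k)) i) (mpMulVec U w i) :=
              congrFun (mulVec_max U (mpMulVec (mpPow U (q+1)) (d k)) w) i
      have hdk : d k i
          = max (max (mpMulVec (mpPow U (q+1+1)) (d k) i) (mpMulVec U w i)) (v i) := by
        calc d k i = max (mpMulVec U (d k) i) (v i) := congrFun hrec' i
          _ = max (max (mpMulVec U (mpMulVec (mpPow U (q+1)) (d k)) i) (mpMulVec U w i)) (v i) := by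
              rw [hU1]
          _ = max (max (mpMulVec (mpPow U (q+1+1)) (d k) i) (mpMulVec U w i)) (v i) := by
              rw [congrFun hUp2 i]
      rw [Apow, hdk]
      apply le_antisymm
      · refine max_le (max_le (le_max_left _ _)
          (le_trans (le_max_right (w i) _) (le_max_right _ _))) ?_
        exact le_trans hvw (le_trans (le_max_left _ (mpMulVec U w i)) (le_max_right _ _))
      · refine max_le (le_trans (le_max_left _ _) (le_max_left _ _))
          (max_le ?_ (le_trans (le_max_right _ _) (le_max_left _ _)))
        rw [← hdk]
        exact hwx
  -- solve: d k = Ap ⊗ v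
  have hfin : d k = mpMulVec Ap v := by
    funext i
    calc d k i
        = max (mpMulVec (mpPow U (p+1)) (d k) i) (mpMulVec Ap v i) := congrFun (key p) i
      _ = mpMulVec Ap v i := by rw [hUpowvec i]; exact max_eq_right bot_le
  rw [hfin]
  funext i
  have e1 : mpMulVec Ap v i
      = max (mpMulVec Ap (mpMulVec T (d (k-1))) i)
          (mpMulVec Ap
            (fun j => (Finset.Icc 1 M).sup fun m => mpMulVec (mpMul T (G m)ᵀ) (d (k-m)) j) i) :=
    congrFun (mulVec_max Ap (mpMulVec T (d (k-1)))
      (fun j => (Finset.Icc 1 M).sup fun m => mpMulVec (mpMul T (G m)ᵀ) (d (k-m)) j)) i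
  have e2 : mpMulVec Ap (mpMulVec T (d (k-1))) i = mpMulVec (mpMul Ap T) (d (k-1)) i := by
    simp only [mulVec_mul]
  have e3 : mpMulVec Ap
        (fun j => (Finset.Icc 1 M).sup fun m => mpMulVec (mpMul T (G m)ᵀ) (d (k-m)) j) i
      = (Finset.Icc 1 M).sup fun m => mpMulVec (mpMul (mpMul Ap T) (G m)ᵀ) (d (k-m)) i := by
    rw [congrFun (mulVec_finsup Ap (Finset.Icc 1 M)
      fun m => mpMulVec (mpMul T (G m)ᵀ) (d (k-m))) i]
    refine Finset.sup_congr rfl fun m _ => ?_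
    simp only [mulVec_mul]
  rw [e1, e2, e3]
  refine mp_sup_split M hM _ _ _ ?_ ?_
  · show mpMulVec (mpMul (mpMul Ap T) (mpAdd (mpId n) (G 1)ᵀ)) (d (k-1)) i
      = max (mpMulVec (mpMul Ap T) (d (k-1)) i)
          (mpMulVec (mpMul (mpMul Ap T) (G 1)ᵀ) (d (k-1)) i)
    simp only [mulVec_mul]
    rw [mulVec_add, mulVec_id]
    rw [mulVec_max T (d (k-1)) (mpMulVec (G 1)ᵀ (d (k-1)))]
    rw [mulVec_max Ap (mpMulVec T (d (k-1))) (mpMulVec T (mpMulVec (G 1)ᵀ (d (k-1))))]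
  · intro m hm
    simp only [if_neg hm]
end
end
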